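/- arXiv:2602.16424 — 4 statements merged into one kernel-verified Lean document; each statement's English description precedes it below -/
import Mathlib

section
/- Fix natural numbers c ≤ k with k > 0 and a real z ≥ 0, and write p̂ = c/k. Then for every real p with p̂ ≤ p ≤ 1, one has p ≤ u(c,k,z) if and only if (p − p̂)² ≤ z² · p(1−p)/k. Equivalently, a candidate true rate p ≥ p̂ exceeds the Wilson upper bound exactly when the empirical rate p̂ falls below p − z·√(p(1−p)/k). -/
/-- The Wilson score upper bound for `c` contradictions among `k` eligible
comparisons, with confidence parameter `z`. -/
noncomputable def wilsonUpper (c k : ℕ) (z : ℝ) : ℝ :=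
  let p : ℝ := (c : ℝ) / (k : ℝ)
  (p + z ^ 2 / (2 * (k : ℝ)) +
      z * Real.sqrt (p * (1 - p) / (k : ℝ) + z ^ 2 / (4 * (k : ℝ) ^ 2))) /
    (1 + z ^ 2 / (k : ℝ))

private lemma wilson_core (n q z p s : ℝ) (hn : 0 < n) (hz : 0 ≤ z)
    (hq0 : 0 ≤ q) (hp : q ≤ p)
    (hs0 : 0 ≤ s) (hs2 : s ^ 2 = q * (1 - q) / n + z ^ 2 / (4 * n ^ 2))
    (hsge : z / (2 * n) ≤ s) :
    p ≤ (q + z ^ 2 / (2 * n) + z * s) / (1 + z ^ 2 / n) ↔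
      (p - q) ^ 2 ≤ z ^ 2 * (p * (1 - p)) / n := by
  have h1t : (0:ℝ) < 1 + z ^ 2 / n := by positivity
  rw [le_div_iff₀ h1t]
  have hp0 : 0 ≤ p := le_trans hq0 hp
  have hzs0 : 0 ≤ z * s := mul_nonneg hz hs0
  have hzs : z ^ 2 / (2 * n) ≤ z * s := by
    have h := mul_le_mul_of_nonneg_left hsge hz
    have heq : z ^ 2 / (2 * n) = z * (z / (2 * n)) := by ring
    linarith [heq ▸ h]
  have hexp : p * (1 + z ^ 2 / n) = p + p * (z ^ 2 / n) := by ring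
  have hpz : 0 ≤ p * (z ^ 2 / n) := by positivity
  have hlow : q + z ^ 2 / (2 * n) - z * s ≤ p * (1 + z ^ 2 / n) := by
    rw [hexp]; linarith
  have key : (p * (1 + z ^ 2 / n) - (q + z ^ 2 / (2 * n))) ^ 2 - z ^ 2 * s ^ 2 =
      (1 + z ^ 2 / n) * ((p - q) ^ 2 - z ^ 2 * (p * (1 - p)) / n) := by
    rw [hs2]; field_simp; ring
  constructor
  · intro h
    have hA2 : (p * (1 + z ^ 2 / n) - (q + z ^ 2 / (2 * n))) ^ 2 ≤ z ^ 2 * s ^ 2 := by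
      nlinarith [hlow, h, hzs0]
    have hD : (1 + z ^ 2 / n) * ((p - q) ^ 2 - z ^ 2 * (p * (1 - p)) / n) ≤ 0 := by
      linarith [key, hA2]
    nlinarith [hD, h1t]
  · intro h
    have hD : (1 + z ^ 2 / n) * ((p - q) ^ 2 - z ^ 2 * (p * (1 - p)) / n) ≤ 0 :=
      mul_nonpos_of_nonneg_of_nonpos h1t.le (by linarith)
    have hA2 : (p * (1 + z ^ 2 / n) - (q + z ^ 2 / (2 * n))) ^ 2 ≤ z ^ 2 * s ^ 2 := by
      linarith [key, hD]
    nlinarith [hA2, hzs0]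

/-- for `p̂ = c/k ≤ p ≤ 1`, one has `p ≤ u(c,k,z)` iff
`(p − p̂)² ≤ z² · p(1−p)/k` (inversion of the one-sided score test). -/
theorem wilsonUpper_inversion (c k : ℕ) (hk : 0 < k) (hck : c ≤ k)
    (z : ℝ) (hz : 0 ≤ z) (p : ℝ) (hp : (c : ℝ) / (k : ℝ) ≤ p) (hp1 : p ≤ 1) :
    p ≤ wilsonUpper c k z ↔
      (p - (c : ℝ) / (k : ℝ)) ^ 2 ≤ z ^ 2 * (p * (1 - p)) / (k : ℝ) := by
  have hn : (0:ℝ) < (k:ℝ) := by exact_mod_cast hk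
  have hq0 : 0 ≤ (c:ℝ) / (k:ℝ) := div_nonneg (Nat.cast_nonneg c) hn.le
  have hq1 : (c:ℝ) / (k:ℝ) ≤ 1 := by
    rw [div_le_one hn]; exact_mod_cast hck
  have hE0 : 0 ≤ (c:ℝ)/(k:ℝ) * (1 - (c:ℝ)/(k:ℝ)) / (k:ℝ) + z ^ 2 / (4 * (k:ℝ) ^ 2) := by
    have h1 : 0 ≤ (c:ℝ)/(k:ℝ) * (1 - (c:ℝ)/(k:ℝ)) / (k:ℝ) :=
      div_nonneg (mul_nonneg hq0 (by linarith)) hn.le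
    have h2 : 0 ≤ z ^ 2 / (4 * (k:ℝ) ^ 2) := by positivity
    linarith
  have hu : wilsonUpper c k z =
      ((c:ℝ)/(k:ℝ) + z ^ 2 / (2 * (k:ℝ)) +
        z * Real.sqrt ((c:ℝ)/(k:ℝ) * (1 - (c:ℝ)/(k:ℝ)) / (k:ℝ) + z ^ 2 / (4 * (k:ℝ) ^ 2))) /
      (1 + z ^ 2 / (k:ℝ)) := rfl
  rw [hu]
  apply wilson_core ((k:ℝ)) ((c:ℝ)/(k:ℝ)) z p _ hn hz hq0 hp (Real.sqrt_nonneg _)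
    (Real.sq_sqrt hE0)
  · have hsqrt : Real.sqrt (z ^ 2 / (4 * (k:ℝ) ^ 2)) = z / (2 * (k:ℝ)) := by
      rw [show z ^ 2 / (4 * (k:ℝ) ^ 2) = (z / (2 * (k:ℝ))) ^ 2 by ring]
      exact Real.sqrt_sq (by positivity)
    rw [← hsqrt]
    apply Real.sqrt_le_sqrt
    have : 0 ≤ (c:ℝ)/(k:ℝ) * (1 - (c:ℝ)/(k:ℝ)) / (k:ℝ) :=
      div_nonneg (mul_nonneg hq0 (by linarith)) hn.le
    linarith
end

section
/- For every natural number k > 0, every real z ≥ 0, and all natural numbers c₁ ≤ c₂ ≤ k, the Wilson upper bound is monotone in the contradiction count: u(c₁,k,z) ≤ u(c₂,k,z). -/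
/-- Key real inequality: monotonicity of `p ↦ p + z √(p(1-p)/n + z²/(4n²))`. -/
lemma wilson_key (n z p q : ℝ) (hn : 0 < n) (hz : 0 ≤ z) (hp : 0 ≤ p)
    (hpq : p ≤ q) (hq : q ≤ 1) :
    p + z * Real.sqrt (p * (1 - p) / n + z ^ 2 / (4 * n ^ 2)) ≤
      q + z * Real.sqrt (q * (1 - q) / n + z ^ 2 / (4 * n ^ 2)) := by
  set A : ℝ := p * (1 - p) / n + z ^ 2 / (4 * n ^ 2) with hAdef
  set B : ℝ := q * (1 - q) / n + z ^ 2 / (4 * n ^ 2) with hBdef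
  have hp1 : p ≤ 1 := le_trans hpq hq
  have hq0 : 0 ≤ q := le_trans hp hpq
  have hA0 : 0 ≤ A := by
    have h1 : 0 ≤ p * (1 - p) := mul_nonneg hp (by linarith)
    have h2 : 0 ≤ z ^ 2 / (4 * n ^ 2) := by positivity
    have h3 : 0 ≤ p * (1 - p) / n := div_nonneg h1 hn.le
    rw [hAdef]; linarith
  have hB0 : 0 ≤ B := by
    have h1 : 0 ≤ q * (1 - q) := mul_nonneg hq0 (by linarith)
    have h2 : 0 ≤ z ^ 2 / (4 * n ^ 2) := by positivity
    have h3 : 0 ≤ q * (1 - q) / n := div_nonneg h1 hn.le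
    rw [hBdef]; linarith
  set sA : ℝ := Real.sqrt A with hsAdef
  set sB : ℝ := Real.sqrt B with hsBdef
  have hsA0 : 0 ≤ sA := Real.sqrt_nonneg A
  have hsB0 : 0 ≤ sB := Real.sqrt_nonneg B
  have hAm : sA * sA = A := Real.mul_self_sqrt hA0
  have hBm : sB * sB = B := Real.mul_self_sqrt hB0
  -- lower bounds on the square roots
  have hsq : Real.sqrt (z ^ 2 / (4 * n ^ 2)) = z / (2 * n) := by
    rw [show z ^ 2 / (4 * n ^ 2) = (z / (2 * n)) ^ 2 by ring]
    exact Real.sqrt_sq (by positivity)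
  have hsAz : z / (2 * n) ≤ sA := by
    rw [← hsq]
    apply Real.sqrt_le_sqrt
    have h1 : 0 ≤ p * (1 - p) / n := div_nonneg (mul_nonneg hp (by linarith)) hn.le
    rw [hAdef]; linarith
  have hsBz : z / (2 * n) ≤ sB := by
    rw [← hsq]
    apply Real.sqrt_le_sqrt
    have h1 : 0 ≤ q * (1 - q) / n := div_nonneg (mul_nonneg hq0 (by linarith)) hn.le
    rw [hBdef]; linarith
  have hsum : z / n ≤ sA + sB := by
    have : z / (2 * n) + z / (2 * n) = z / n := by field_simp; ring
    linarith
  rcases eq_or_lt_of_le hz with hz0 | hzpos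
  · -- z = 0
    rw [← hz0]; simpa using hpq
  · -- z > 0, so sA + sB > 0
    have hpos : 0 < sA + sB := lt_of_lt_of_le (by positivity) hsum
    have hABval : A - B = (q - p) * (p + q - 1) / n := by
      rw [hAdef, hBdef]; field_simp; ring
    have key : (z * sA - z * sB) * (sA + sB) ≤ (q - p) * (sA + sB) := by
      have e : (z * sA - z * sB) * (sA + sB) = z * (A - B) := by
        rw [← hAm, ← hBm]; ring
      rw [e, hABval]
      have h1 : z * ((q - p) * (p + q - 1) / n) ≤ z * ((q - p) / n) := by
        apply mul_le_mul_of_nonneg_left _ hz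
        apply div_le_div_of_nonneg_right _ hn.le
        nlinarith
      have h2 : z * ((q - p) / n) ≤ (q - p) * (sA + sB) := by
        have e2 : z * ((q - p) / n) = (q - p) * (z / n) := by ring
        rw [e2]
        exact mul_le_mul_of_nonneg_left hsum (by linarith)
      linarith
    have hfin : z * sA - z * sB ≤ q - p :=
      le_of_mul_le_mul_right key hpos
    linarith

/-- monotonicity of the Wilson upper bound in the contradiction
count: for `c₁ ≤ c₂ ≤ k`, `u(c₁,k,z) ≤ u(c₂,k,z)`. -/
theorem wilsonUpper_mono_count (k : ℕ) (hk : 0 < k) (z : ℝ) (hz : 0 ≤ z)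
    (c₁ c₂ : ℕ) (h12 : c₁ ≤ c₂) (h2k : c₂ ≤ k) :
    wilsonUpper c₁ k z ≤ wilsonUpper c₂ k z := by
  unfold wilsonUpper
  dsimp only
  have hn : (0:ℝ) < (k:ℝ) := by exact_mod_cast hk
  have hp : (0:ℝ) ≤ (c₁:ℝ) / (k:ℝ) := by positivity
  have hpq : (c₁:ℝ) / (k:ℝ) ≤ (c₂:ℝ) / (k:ℝ) := by
    apply div_le_div_of_nonneg_right _ hn.le |>.trans_eq rfl
    exact_mod_cast h12
  have hq : (c₂:ℝ) / (k:ℝ) ≤ 1 := by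
    rw [div_le_one hn]; exact_mod_cast h2k
  have hden : (0:ℝ) < 1 + z ^ 2 / (k:ℝ) := by positivity
  have hnum := wilson_key (k:ℝ) z ((c₁:ℝ)/(k:ℝ)) ((c₂:ℝ)/(k:ℝ)) hn hz hp hpq hq
  apply div_le_div_of_nonneg_right _ hden.le |>.trans_eq rfl
  linarith
end

section
/- For all natural numbers c ≤ k with k > 0 and every real z ≥ 0, the width of the Wilson bound above the empirical rate is controlled by u(c,k,z) − c/k ≤ z/(2·√k) + z²/k. -/
/-- width bound for the Wilson upper bound:
`u(c,k,z) − c/k ≤ z/(2√k) + z²/k`. -/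
theorem wilsonUpper_width (c k : ℕ) (hk : 0 < k) (hck : c ≤ k)
    (z : ℝ) (hz : 0 ≤ z) :
    wilsonUpper c k z - (c : ℝ) / (k : ℝ) ≤
      z / (2 * Real.sqrt (k : ℝ)) + z ^ 2 / (k : ℝ) := by
  have hK : (0:ℝ) < (k:ℝ) := by exact_mod_cast hk
  set K : ℝ := (k:ℝ) with hKdef
  have hsK : 0 < Real.sqrt K := Real.sqrt_pos.2 hK
  have hsKsq : Real.sqrt K * Real.sqrt K = K := Real.mul_self_sqrt hK.le
  set p : ℝ := (c:ℝ) / K with hpdef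
  have hp0 : 0 ≤ p := div_nonneg (by positivity) hK.le
  have hp1 : p ≤ 1 := by
    rw [hpdef, div_le_one hK, hKdef]; exact_mod_cast hck
  set S : ℝ := Real.sqrt (p * (1 - p) / K + z ^ 2 / (4 * K ^ 2)) with hSdef
  -- bound on the square root
  have hS : S ≤ 1 / (2 * Real.sqrt K) + z / (2 * K) := by
    have h1 : p * (1 - p) / K ≤ 1 / (4 * K) := by
      rw [div_le_div_iff₀ hK (by positivity)]
      nlinarith [mul_nonneg (sq_nonneg (1 - 2 * p)) hK.le]
    have ha : 0 ≤ p * (1 - p) / K := by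
      apply div_nonneg _ hK.le; nlinarith
    have hb : 0 ≤ z ^ 2 / (4 * K ^ 2) := by positivity
    have hsplit : S ≤ Real.sqrt (p * (1 - p) / K) + Real.sqrt (z ^ 2 / (4 * K ^ 2)) := by
      have h := Real.sqrt_le_sqrt (show p * (1 - p) / K + z ^ 2 / (4 * K ^ 2) ≤
          (Real.sqrt (p * (1 - p) / K) + Real.sqrt (z ^ 2 / (4 * K ^ 2)))^2 by
        nlinarith [Real.sq_sqrt ha, Real.sq_sqrt hb,
          Real.sqrt_nonneg (p * (1 - p) / K), Real.sqrt_nonneg (z ^ 2 / (4 * K ^ 2))])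
      rwa [Real.sqrt_sq (by positivity)] at h
    calc S ≤ Real.sqrt (p * (1 - p) / K) + Real.sqrt (z ^ 2 / (4 * K ^ 2)) := hsplit
      _ ≤ 1 / (2 * Real.sqrt K) + z / (2 * K) := by
          gcongr
          · have : Real.sqrt (p * (1 - p) / K) ≤ Real.sqrt (1 / (4 * K)) :=
              Real.sqrt_le_sqrt h1
            refine this.trans_eq ?_
            rw [show (1:ℝ) / (4 * K) = (1 / (2 * Real.sqrt K))^2 by
              field_simp; nlinarith]
            exact Real.sqrt_sq (by positivity)
          · rw [show z ^ 2 / (4 * K ^ 2) = (z / (2 * K))^2 by ring]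
            exact (Real.sqrt_sq (by positivity)).le
  have hD : (0:ℝ) < 1 + z ^ 2 / K := by positivity
  show (p + z ^ 2 / (2 * K) + z * S) / (1 + z ^ 2 / K) - p ≤
      z / (2 * Real.sqrt K) + z ^ 2 / K
  rw [sub_le_iff_le_add, div_le_iff₀ hD]
  have h2 : z * S ≤ z / (2 * Real.sqrt K) + z ^ 2 / (2 * K) := by
    calc z * S ≤ z * (1 / (2 * Real.sqrt K) + z / (2 * K)) := by
          exact mul_le_mul_of_nonneg_left hS hz
      _ = z / (2 * Real.sqrt K) + z ^ 2 / (2 * K) := by ring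
  have h3 : 0 ≤ (z / (2 * Real.sqrt K) + z ^ 2 / K) * (z ^ 2 / K) := by positivity
  have h4 : 0 ≤ p * (z ^ 2 / K) := by positivity
  have hhalf : z ^ 2 / (2 * K) + z ^ 2 / (2 * K) = z ^ 2 / K := by ring
  nlinarith [h2, h3, h4, hhalf]
end

section
/- (Certification Soundness, exact Chebyshev form of Theorem 1.) Let δ ∈ (0,1), set z = 1/√δ, let p ∈ [0,1] be the true contradictory-divergence rate of a term, let k > 0 be the number of eligible comparisons, and let the contradiction count C be a binomial(k,p) random variable (the number of successes in k independent Bernoulli(p) trials). Then the probability that p ≤ u(C,k,z) is at least 1 − δ; equivalently, the event that the term is certified at threshold τ (i.e. u(C,k,z) ≤ τ) while its true rate exceeds τ (i.e. p > τ) has probability at most δ, for every τ ∈ [0,1]. -/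
/-!
If `p` exceeds the Wilson upper bound `u(C, k, z)`, then `p` lies beyond the larger root of the
quadratic `(q - C/k)² = z² q(1 - q)/k`, so the observed frequency deviates from `p` by more than
`z` standard deviations: `(p - C/k)² > z² p(1 - p)/k`. By Chebyshev's inequality for the binomial
law (whose variance identity is that of the Bernstein polynomials) this has probability at most
`1/z² = δ`. Certification at `τ < p` forces `u(C, k, z) ≤ τ < p`, which lies in the same bad event.
-/

open MeasureTheory

open Finset
open scoped unitInterval

set_option linter.deprecated false

theorem mul_lt_sq_sub_of_wilsonUpper_lt {c k : ℕ} (hc : c ≤ k) (hk : 0 < k) {z p : ℝ}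
    (hz : 0 ≤ z) (h : wilsonUpper c k z < p) : z ^ 2 * (p * (1 - p) / k) < (p - c / k) ^ 2 := by
  have hK : (0 : ℝ) < k := by exact_mod_cast hk
  set q : ℝ := c / k
  have hq1 : q ≤ 1 := div_le_one_of_le₀ (by exact_mod_cast hc) hK.le
  set w := q * (1 - q) / k + z ^ 2 / (4 * k ^ 2)
  set a := 1 + z ^ 2 / k
  have ha : 0 < a := by positivity
  set L := a * p - q - z ^ 2 / (2 * k)
  have hL : z * √w < L := by
    rw [wilsonUpper, div_lt_iff₀ ha] at h
    linarith
  have hLsq : z ^ 2 * w < L ^ 2 := by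
    rw [← Real.sq_sqrt (show 0 ≤ w by positivity), ← mul_pow]
    exact pow_lt_pow_left₀ hL (by positivity) two_ne_zero
  -- Completing the square: `wilsonUpper c k z` is the larger root of `(p - q)² - z² p(1 - p)/k`.
  have hquad : L ^ 2 - z ^ 2 * w = a * ((p - q) ^ 2 - z ^ 2 * (p * (1 - p) / k)) := by
    simp only [L, w, a]
    field_simp
    ring
  have := (mul_pos_iff_of_pos_left ha).1 (hquad ▸ sub_pos.2 hLsq)
  linarith

/-- The strict threshold keeps the bound valid when the mean vanishes (`p ∈ {0, 1}` below). -/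
theorem Finset.sum_filter_mul_sum_lt_le_inv {ι : Type*} (s : Finset ι) {w g : ι → ℝ}
    (hw : ∀ i ∈ s, 0 ≤ w i) (hg : ∀ i ∈ s, 0 ≤ g i) {t : ℝ} (ht : 0 < t) :
    ∑ i ∈ s with t * ∑ j ∈ s, w j * g j < g i, w i ≤ t⁻¹ := by
  set M := ∑ j ∈ s, w j * g j
  have hwg : ∀ i ∈ s, 0 ≤ w i * g i := fun i hi => mul_nonneg (hw i hi) (hg i hi)
  rcases (show 0 ≤ M from sum_nonneg hwg).eq_or_lt with hM | hM
  · have hzero : ∀ i ∈ s, w i * g i = 0 := (sum_eq_zero_iff_of_nonneg hwg).1 hM.symm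
    rw [sum_eq_zero fun i hi => ?_]
    · positivity
    obtain ⟨his, hgi⟩ := mem_filter.1 hi
    rw [← hM, mul_zero] at hgi
    simpa [hgi.ne'] using hzero i his
  calc ∑ i ∈ s with t * M < g i, w i
      ≤ ∑ i ∈ s with t * M < g i, w i * g i / (t * M) := by
        refine sum_le_sum fun i hi => ?_
        obtain ⟨his, hgi⟩ := mem_filter.1 hi
        rw [le_div_iff₀ (by positivity)]
        exact mul_le_mul_of_nonneg_left hgi.le (hw i his)
    _ ≤ M / (t * M) := by
        rw [← sum_div]
        gcongr
        exact sum_le_sum_of_subset_of_nonneg (filter_subset _ s) fun i hi _ => hwg i hi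
    _ = t⁻¹ := by field_simp

theorem bernstein.sum_filter_mul_variance_lt_sq_le_inv {n : ℕ} (hn : n ≠ 0) (x : I) {t : ℝ}
    (ht : 0 < t) :
    ∑ k : Fin (n + 1) with t * (x * (1 - x) / n) < (x - ((k : Fin (n + 1)) : ℕ) / n) ^ 2,
      bernstein n k x ≤ t⁻¹ := by
  have hvar : ∑ k : Fin (n + 1), bernstein n k x * (x - (k : ℕ) / n) ^ 2 = x * (1 - x) / n := by
    simpa only [mul_comm, bernstein.z] using bernstein.variance hn x
  have := (univ : Finset (Fin (n + 1))).sum_filter_mul_sum_lt_le_inv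
    (w := fun k => bernstein n k x) (g := fun k => (x - (k : ℕ) / n) ^ 2)
    (fun k _ => bernstein_nonneg) (fun k _ => sq_nonneg _) ht
  rwa [hvar] at this

theorem PMF.binomial_toNNReal_apply (x : I) (h : Real.toNNReal x ≤ 1) (n : ℕ) (c : Fin (n + 1)) :
    PMF.binomial (Real.toNNReal x) h n c = ENNReal.ofReal (bernstein n c x) := by
  have hx : (0 : ℝ) ≤ x := x.2.1
  rw [PMF.binomial_apply, bernstein_apply, ENNReal.ofReal_mul (by positivity),
    ENNReal.ofReal_mul (by positivity), ENNReal.ofReal_pow hx,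
    ENNReal.ofReal_pow (sub_nonneg.2 x.2.2), ENNReal.ofReal_sub _ hx]
  simp only [ENNReal.ofReal_one, ENNReal.ofReal_natCast, Fin.val_last]
  change ENNReal.ofReal x ^ (c : ℕ) * (1 - ENNReal.ofReal x) ^ (n - c : ℕ) * _ = _
  ring

theorem PMF.binomial_toNNReal_toMeasure_setOf (x : I) (h : Real.toNNReal x ≤ 1) (n : ℕ)
    (P : Fin (n + 1) → Prop) [DecidablePred P] :
    (PMF.binomial (Real.toNNReal x) h n).toMeasure {c | P c} =
      ENNReal.ofReal (∑ c with P c, bernstein n c x) := by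
  rw [← coe_filter_univ, toMeasure_apply_finset,
    ENNReal.ofReal_sum_of_nonneg fun _ _ => bernstein_nonneg]
  exact sum_congr rfl fun c _ => binomial_toNNReal_apply x h n c

theorem PMF.binomial_toNNReal_toMeasure_mul_variance_lt_sq_le {n : ℕ} (hn : n ≠ 0) (x : I)
    (h : Real.toNNReal x ≤ 1) {t : ℝ} (ht : 0 < t) :
    (PMF.binomial (Real.toNNReal x) h n).toMeasure
        {c | t * (x * (1 - x) / n) < (x - c / n) ^ 2} ≤ ENNReal.ofReal t⁻¹ := by
  classical
  rw [binomial_toNNReal_toMeasure_setOf]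
  exact ENNReal.ofReal_le_ofReal (bernstein.sum_filter_mul_variance_lt_sq_le_inv hn x ht)

theorem certification_soundness_general (δ : ℝ) (hδ0 : 0 < δ)
    (p : ℝ) (hp0 : 0 ≤ p) (hp1 : p ≤ 1) (k : ℕ) (hk : 0 < k)
    (hp : ENNReal.ofReal p ≤ 1) :
    (1 - ENNReal.ofReal δ ≤
        (PMF.binomial (Real.toNNReal p) (ENNReal.coe_le_one_iff.mp hp) k).toMeasure
          {c : Fin (k + 1) | p ≤ wilsonUpper (c : ℕ) k (1 / Real.sqrt δ)}) ∧
      ∀ τ : ℝ, 0 ≤ τ → τ ≤ 1 →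
        (PMF.binomial (Real.toNNReal p) (ENNReal.coe_le_one_iff.mp hp) k).toMeasure
            {c : Fin (k + 1) |
              wilsonUpper (c : ℕ) k (1 / Real.sqrt δ) ≤ τ ∧ τ < p} ≤
          ENNReal.ofReal δ := by
  set z := 1 / √δ
  set μ := (PMF.binomial (Real.toNNReal p) (ENNReal.coe_le_one_iff.mp hp) k).toMeasure
  have hz : 0 ≤ z := by positivity
  have hzδ : (z ^ 2)⁻¹ = δ := by simp [z, Real.sq_sqrt hδ0.le]
  have hbad : μ {c | ¬ p ≤ wilsonUpper c k z} ≤ ENNReal.ofReal δ :=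
    calc μ {c | ¬ p ≤ wilsonUpper c k z}
        ≤ μ {c : Fin (k + 1) | z ^ 2 * (p * (1 - p) / k) < (p - (c : ℕ) / k) ^ 2} :=
          measure_mono fun c hc => by
            rw [Set.mem_setOf_eq]
            exact mul_lt_sq_sub_of_wilsonUpper_lt c.is_le hk hz (not_le.1 hc)
      _ ≤ ENNReal.ofReal (z ^ 2)⁻¹ :=
          PMF.binomial_toNNReal_toMeasure_mul_variance_lt_sq_le hk.ne' ⟨p, hp0, hp1⟩ _
            (by positivity)
      _ = ENNReal.ofReal δ := by rw [hzδ]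
  refine ⟨?_, fun τ _ _ => (measure_mono fun c hc => ?_).trans hbad⟩
  · calc 1 - ENNReal.ofReal δ
        ≤ 1 - μ {c | ¬ p ≤ wilsonUpper c k z} := tsub_le_tsub_left hbad 1
      _ = μ {c | p ≤ wilsonUpper c k z} := by
          rw [← Set.compl_setOf, ← prob_compl_eq_one_sub .of_discrete, compl_compl]
  · exact not_le.2 (hc.1.trans_lt hc.2)

/-- Certification Soundness, exact Chebyshev form of Theorem 1.
With `δ ∈ (0,1)`, `z = 1/√δ`, a true contradiction rate `p ∈ [0,1]`, `k > 0`
eligible comparisons, and a binomial(k,p) contradiction count `C`: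
the probability that `p ≤ u(C,k,z)` is at least `1 − δ`, and for every
threshold `τ ∈ [0,1]` the event that the term is certified (`u(C,k,z) ≤ τ`)
while `p > τ` has probability at most `δ`. -/
theorem certification_soundness (δ : ℝ) (hδ0 : 0 < δ) (hδ1 : δ < 1)
    (p : ℝ) (hp0 : 0 ≤ p) (hp1 : p ≤ 1) (k : ℕ) (hk : 0 < k)
    (hp : ENNReal.ofReal p ≤ 1) :
    (1 - ENNReal.ofReal δ ≤
        (PMF.binomial (Real.toNNReal p) (ENNReal.coe_le_one_iff.mp hp) k).toMeasure
          {c : Fin (k + 1) | p ≤ wilsonUpper (c : ℕ) k (1 / Real.sqrt δ)}) ∧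
      ∀ τ : ℝ, 0 ≤ τ → τ ≤ 1 →
        (PMF.binomial (Real.toNNReal p) (ENNReal.coe_le_one_iff.mp hp) k).toMeasure
            {c : Fin (k + 1) |
              wilsonUpper (c : ℕ) k (1 / Real.sqrt δ) ≤ τ ∧ τ < p} ≤
          ENNReal.ofReal δ :=
  certification_soundness_general δ hδ0 p hp0 hp1 k hk hp
end
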